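/- arXiv:2512.12047 — 13 statements merged into one kernel-verified Lean document; each statement's English description precedes it below -/
import Mathlib

section
/- Let G be a connected graph of diameter 3, x a vertex, and i ∈ {2,3}. If y and y' are distinct vertices with d(x,y)=d(x,y')=i, then y' ∉ line(x,y); in particular line(x,y) ≠ line(x,y') and line(x,y) ∩ {z : d(x,z)=i} = {y}. -/
def graphLine {V : Type*} (G : SimpleGraph V) (x y : V) : Set V :=
  {x, y} ∪ {z | G.dist z y = G.dist z x + G.dist x y ∨
    G.dist x y = G.dist x z + G.dist z y ∨
    G.dist x z = G.dist x y + G.dist y z}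

lemma key_not_mem {V : Type*} (G : SimpleGraph V) (hconn : G.Connected)
    (hdiam : ∀ a b : V, G.dist a b ≤ 3)
    (x y y' : V) (i : ℕ) (hi : 2 ≤ i) (hne : y ≠ y')
    (hy : G.dist x y = i) (hy' : G.dist x y' = i) :
    y' ∉ graphLine G x y := by
  intro h
  have hpos : 0 < G.dist y' y := hconn.pos_dist_of_ne (Ne.symm hne)
  have hxy' : y' ≠ x := by
    intro h; subst h; rw [SimpleGraph.dist_self] at hy'; omega
  rcases h with h | h
  · rcases h with h | h
    · exact hxy' h
    · exact hne h.symm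
  · simp only [Set.mem_setOf_eq] at h
    have hc : G.dist y' x = G.dist x y' := SimpleGraph.dist_comm
    have hc2 : G.dist y' y = G.dist y y' := SimpleGraph.dist_comm
    have hd := hdiam y' y
    rcases h with h | h | h <;> omega

theorem stmt_1 {V : Type*} (G : SimpleGraph V) (hconn : G.Connected)
    (hdiam : ∀ a b : V, G.dist a b ≤ 3) (hex : ∃ a b : V, G.dist a b = 3)
    (x y y' : V) (i : ℕ) (hi : i = 2 ∨ i = 3) (hne : y ≠ y')
    (hy : G.dist x y = i) (hy' : G.dist x y' = i) :
    y' ∉ graphLine G x y ∧ graphLine G x y ≠ graphLine G x y' ∧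
      graphLine G x y ∩ {z | G.dist x z = i} = {y} := by
  have hi2 : 2 ≤ i := by omega
  have hmain := key_not_mem G hconn hdiam x y y' i hi2 hne hy hy'
  refine ⟨hmain, ?_, ?_⟩
  · intro heq
    apply hmain
    rw [heq]
    exact Or.inl (Or.inr rfl)
  · ext z
    simp only [Set.mem_inter_iff, Set.mem_setOf_eq, Set.mem_singleton_iff]
    constructor
    · rintro ⟨hz, hzd⟩
      by_contra hzy
      exact key_not_mem G hconn hdiam x y z i hi2 (Ne.symm hzy) hy hzd hz
    · rintro rfl
      exact ⟨Or.inl (Or.inr rfl), hy⟩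
end

section
/- Let G be a connected graph of diameter 3 and x a vertex with i ∈ {2,3}. For any subset A of N^i(x), the map y ↦ line(x,y) is injective on A, so the number of distinct lines {line(x,y) : y ∈ A} equals |A|. -/
theorem stmt_2 {V : Type*} [Fintype V] (G : SimpleGraph V) (hconn : G.Connected)
    (hdiam : ∀ a b : V, G.dist a b ≤ 3) (hex : ∃ a b : V, G.dist a b = 3)
    (x : V) (i : ℕ) (hi : i = 2 ∨ i = 3) (A : Set V)
    (hA : A ⊆ {y | G.dist x y = i}) :
    Set.InjOn (fun y => graphLine G x y) A ∧
      ((fun y => graphLine G x y) '' A).ncard = A.ncard := by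
  have hinj : Set.InjOn (fun y => graphLine G x y) A := by
    intro a ha b hb hab
    have hda : G.dist x a = i := hA ha
    have hdb : G.dist x b = i := hA hb
    have hi2 : 2 ≤ i := by rcases hi with h | h <;> omega
    have hab' : graphLine G x a = graphLine G x b := hab
    have hbmem : b ∈ graphLine G x a := by
      rw [hab']
      left; right; rfl
    rcases hbmem with h | h
    · rcases h with h | h
      · exfalso
        have : G.dist x b = 0 := by rw [h]; exact G.dist_self
        omega
      · exact h.symm
    · simp only [Set.mem_setOf_eq] at h
      rcases h with h | h | h
      · exfalso
        have h1 : G.dist b x = i := by rw [SimpleGraph.dist_comm]; exact hdb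
        have h2 := hdiam b a
        omega
      · have : G.dist b a = 0 := by
          omega
        exact ((hconn b a).dist_eq_zero_iff.mp this).symm
      · have : G.dist a b = 0 := by
          omega
        exact (hconn a b).dist_eq_zero_iff.mp this
  exact ⟨hinj, Set.ncard_image_of_injOn hinj⟩
end

section
/- Let G be a connected graph of diameter 3 and S a subset of vertices that is either an independent set or a clique. Then for any distinct x, y ∈ S, line(x,y) ∩ S = {x,y}. -/
theorem stmt_4 {V : Type*} (G : SimpleGraph V) (hconn : G.Connected)
    (hdiam : ∀ a b : V, G.dist a b ≤ 3) (hex : ∃ a b : V, G.dist a b = 3)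
    (S : Set V)
    (hS : (∀ a ∈ S, ∀ b ∈ S, ¬ G.Adj a b) ∨ (∀ a ∈ S, ∀ b ∈ S, a ≠ b → G.Adj a b))
    (x y : V) (hx : x ∈ S) (hy : y ∈ S) (hne : x ≠ y) :
    graphLine G x y ∩ S = {x, y} := by
  apply Set.Subset.antisymm
  · rintro z ⟨hzl, hzS⟩
    by_contra hz
    obtain ⟨hzx, hzy⟩ : z ≠ x ∧ z ≠ y := by
      simpa using hz
    have hline : G.dist z y = G.dist z x + G.dist x y ∨
        G.dist x y = G.dist x z + G.dist z y ∨
        G.dist x z = G.dist x y + G.dist y z := by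
      rcases hzl with h | h
      · rcases h with h | h
        · exact absurd h hzx
        · exact absurd h hzy
      · exact h
    rcases hS with hind | hcl
    · -- independent: all pairwise distances ≥ 2
      have d2 : ∀ a ∈ S, ∀ b ∈ S, a ≠ b → 2 ≤ G.dist a b := by
        intro a ha b hb hab
        have h1 : G.dist a b ≠ 1 := fun h =>
          hind a ha b hb (SimpleGraph.dist_eq_one_iff_adj.mp h)
        have h0 : 0 < G.dist a b := hconn.pos_dist_of_ne hab
        omega
      have hxy := d2 x hx y hy hne
      have hzx' := d2 z hzS x hx hzx
      have hzy' := d2 z hzS y hy hzy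
      have hxz' := d2 x hx z hzS hzx.symm
      have hyz' := d2 y hy z hzS hzy.symm
      have c1 : G.dist z x = G.dist x z := G.dist_comm
      have c2 : G.dist z y = G.dist y z := G.dist_comm
      have h1 := hdiam z y
      have h2 := hdiam x z
      have h3 := hdiam x y
      omega
    · -- clique: all pairwise distances = 1
      have d1 : ∀ a ∈ S, ∀ b ∈ S, a ≠ b → G.dist a b = 1 := fun a ha b hb hab =>
        SimpleGraph.dist_eq_one_iff_adj.mpr (hcl a ha b hb hab)
      have hxy := d1 x hx y hy hne
      have hzx' := d1 z hzS x hx hzx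
      have hzy' := d1 z hzS y hy hzy
      have hxz' := d1 x hx z hzS hzx.symm
      have hyz' := d1 y hy z hzS hzy.symm
      omega
  · rintro z (rfl | rfl)
    · exact ⟨Or.inl (Or.inl rfl), hx⟩
    · exact ⟨Or.inl (Or.inr rfl), hy⟩
end

section
/- Let p ≥ 3 and p_1,...,p_q ≥ 1 with q ≥ 2 and p_1+...+p_q ≤ p. Then the number of distinct lines of the graph M_{p,p_1,...,p_q} is C(p,2)+1 (binomial coefficient p choose 2, plus 1). -/
/-- The set of lines of a graph. -/
def graphLines {V : Type*} (G : SimpleGraph V) : Set (Set V) :=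
  {l | ∃ x y : V, x ≠ y ∧ l = graphLine G x y}

def Mgraph (p q : ℕ) (ps : Fin q → ℕ) (m : (Σ i : Fin q, Fin (ps i)) → Fin p) :
    SimpleGraph (Fin p ⊕ Σ i : Fin q, Fin (ps i)) where
  Adj u v :=
    match u, v with
    | Sum.inl a, Sum.inl b => a ≠ b
    | Sum.inl a, Sum.inr s => m s = a
    | Sum.inr s, Sum.inl a => m s = a
    | Sum.inr s, Sum.inr t => s.1 = t.1 ∧ s ≠ t
  symm := by
    constructor
    rintro (a | s) (b | t) h
    · exact h.symm
    · exact h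
    · exact h
    · exact ⟨h.1.symm, h.2.symm⟩
  loopless := by
    constructor
    rintro (a | s) h
    · exact h rfl
    · exact h.2 rfl

open Sum SimpleGraph

section Aux

variable {p q : ℕ} {ps : Fin q → ℕ} {m : (Σ i : Fin q, Fin (ps i)) → Fin p}

lemma Mgraph_reach (x y : Fin p ⊕ Σ i, Fin (ps i)) : (Mgraph p q ps m).Reachable x y := by
  have key : ∀ v : Fin p ⊕ Σ i, Fin (ps i), ∃ a, (Mgraph p q ps m).Reachable v (inl a) := by
    rintro (a | s)
    · exact ⟨a, Reachable.refl _⟩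
    · exact ⟨m s, (show (Mgraph p q ps m).Adj (inr s) (inl (m s)) from rfl).reachable⟩
  obtain ⟨a, ha⟩ := key x
  obtain ⟨b, hb⟩ := key y
  refine ha.trans (Reachable.trans ?_ hb.symm)
  by_cases hab : a = b
  · subst hab; exact Reachable.refl _
  · exact (show (Mgraph p q ps m).Adj (inl a) (inl b) from hab).reachable

/-- Lipschitz lower bound for graph distance. -/
lemma lip_le_dist {V : Type*} (G : SimpleGraph V) (f : V → ℤ)
    (hf : ∀ u v, G.Adj u v → f v ≤ f u + 1) {x y : V} (h : G.Reachable x y) :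
    f y ≤ f x + G.dist x y := by
  suffices H : ∀ {x y : V} (w : G.Walk x y), f y ≤ f x + w.length by
    obtain ⟨w, hw⟩ := h.exists_walk_length_eq_dist
    rw [← hw]
    exact H w
  intro x y w
  induction w with
  | nil => simp
  | cons h' w ih =>
      simp only [SimpleGraph.Walk.length_cons]
      push_cast
      have := hf _ _ h'
      push_cast at ih
      linarith

lemma Mdist_ll {a b : Fin p} (h : a ≠ b) :
    (Mgraph p q ps m).dist (inl a) (inl b) = 1 :=
  SimpleGraph.dist_eq_one_iff_adj.mpr h

lemma Mdist_lr_eq {s : Σ i, Fin (ps i)} :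
    (Mgraph p q ps m).dist (inl (m s)) (inr s) = 1 :=
  SimpleGraph.dist_eq_one_iff_adj.mpr rfl

lemma Mdist_rl_eq {s : Σ i, Fin (ps i)} :
    (Mgraph p q ps m).dist (inr s) (inl (m s)) = 1 := by
  rw [SimpleGraph.dist_comm]; exact Mdist_lr_eq

lemma Mdist_lr {a : Fin p} {s : Σ i, Fin (ps i)} (h : a ≠ m s) :
    (Mgraph p q ps m).dist (inl a) (inr s) = 2 := by
  have hub : (Mgraph p q ps m).dist (inl a) (inr s) ≤ 2 := by
    have := SimpleGraph.dist_le
      (SimpleGraph.Walk.cons (show (Mgraph p q ps m).Adj (inl a) (inl (m s)) from h)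
        (SimpleGraph.Walk.cons (show (Mgraph p q ps m).Adj (inl (m s)) (inr s) from rfl)
          SimpleGraph.Walk.nil))
    simpa using this
  have h0 : (Mgraph p q ps m).dist (inl a) (inr s) ≠ 0 :=
    SimpleGraph.dist_ne_zero_iff_ne_and_reachable.mpr ⟨by simp, Mgraph_reach _ _⟩
  have h1 : (Mgraph p q ps m).dist (inl a) (inr s) ≠ 1 := by
    intro hc
    exact h (show m s = a from SimpleGraph.dist_eq_one_iff_adj.mp hc).symm
  omega

lemma Mdist_rl {a : Fin p} {s : Σ i, Fin (ps i)} (h : a ≠ m s) :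
    (Mgraph p q ps m).dist (inr s) (inl a) = 2 := by
  rw [SimpleGraph.dist_comm]; exact Mdist_lr h

lemma Mdist_rr_same {s t : Σ i, Fin (ps i)} (h1 : s.1 = t.1) (h2 : s ≠ t) :
    (Mgraph p q ps m).dist (inr s) (inr t) = 1 :=
  SimpleGraph.dist_eq_one_iff_adj.mpr ⟨h1, h2⟩

lemma Mdist_rr_diff (hm : Function.Injective m) {s t : Σ i, Fin (ps i)} (h : s.1 ≠ t.1) :
    (Mgraph p q ps m).dist (inr s) (inr t) = 3 := by
  classical
  have hst : s ≠ t := fun hc => h (congrArg Sigma.fst hc)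
  have hmst : m s ≠ m t := fun hc => hst (hm hc)
  have hub : (Mgraph p q ps m).dist (inr s) (inr t) ≤ 3 := by
    have := SimpleGraph.dist_le
      (SimpleGraph.Walk.cons (show (Mgraph p q ps m).Adj (inr s) (inl (m s)) from rfl)
        (SimpleGraph.Walk.cons (show (Mgraph p q ps m).Adj (inl (m s)) (inl (m t)) from hmst)
          (SimpleGraph.Walk.cons (show (Mgraph p q ps m).Adj (inl (m t)) (inr t) from rfl)
            SimpleGraph.Walk.nil)))
    simpa using this
  have hlb : (3 : ℤ) ≤ ((Mgraph p q ps m).dist (inr s) (inr t) : ℤ) := by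
    set f : (Fin p ⊕ Σ i, Fin (ps i)) → ℤ :=
      Sum.elim (fun a => if ∃ u : Σ i, Fin (ps i), u.1 = s.1 ∧ m u = a then 1 else 2)
        (fun u => if u.1 = s.1 then 0 else 3) with hf_def
    have hf : ∀ u v, (Mgraph p q ps m).Adj u v → f v ≤ f u + 1 := by
      rintro (a | u) (b | v) hadj
      · simp only [hf_def, Sum.elim_inl]
        split_ifs <;> omega
      · have hmv : m v = a := hadj
        by_cases hv : v.1 = s.1
        · simp only [hf_def, Sum.elim_inl, Sum.elim_inr, if_pos hv]
          split_ifs <;> omega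
        · have hna : ¬∃ u : Σ i, Fin (ps i), u.1 = s.1 ∧ m u = a := by
            rintro ⟨u, hu1, hu2⟩
            exact hv (by rw [← hm (hu2.trans hmv.symm)]; exact hu1)
          simp only [hf_def, Sum.elim_inl, Sum.elim_inr, if_neg hv, if_neg hna]
          omega
      · have hmu : m u = b := hadj
        by_cases hu : u.1 = s.1
        · have hb : ∃ w : Σ i, Fin (ps i), w.1 = s.1 ∧ m w = b := ⟨u, hu, hmu⟩
          simp only [hf_def, Sum.elim_inl, Sum.elim_inr, if_pos hu, if_pos hb]
          omega
        · simp only [hf_def, Sum.elim_inl, Sum.elim_inr, if_neg hu]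
          split_ifs <;> omega
      · have h1 : u.1 = v.1 := hadj.1
        simp only [hf_def, Sum.elim_inr, h1]
        omega
    have hfs : f (inr s) = 0 := by rw [hf_def]; simp
    have hft : f (inr t) = 3 := by rw [hf_def]; simp [Ne.symm h]
    have := lip_le_dist (Mgraph p q ps m) f hf (Mgraph_reach (inr s) (inr t))
    rw [hfs, hft] at this
    linarith
  have hlb' : 3 ≤ (Mgraph p q ps m).dist (inr s) (inr t) := by exact_mod_cast hlb
  omega

/-- The "pair" line determined by two vertices of the central clique. -/
def Lp (m : (Σ i : Fin q, Fin (ps i)) → Fin p) (a b : Fin p) :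
    Set (Fin p ⊕ Σ i, Fin (ps i)) :=
  {v | v = inl a ∨ v = inl b ∨ ∃ s, v = inr s ∧ (m s = a ∨ m s = b)}

lemma Lp_comm (a b : Fin p) : Lp m a b = Lp m b a := by
  ext v
  simp only [Lp, Set.mem_setOf_eq]
  constructor <;> rintro (h | h | ⟨s, rfl, h | h⟩)
  · exact Or.inr (Or.inl h)
  · exact Or.inl h
  · exact Or.inr (Or.inr ⟨s, rfl, Or.inr h⟩)
  · exact Or.inr (Or.inr ⟨s, rfl, Or.inl h⟩)
  · exact Or.inr (Or.inl h)
  · exact Or.inl h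
  · exact Or.inr (Or.inr ⟨s, rfl, Or.inr h⟩)
  · exact Or.inr (Or.inr ⟨s, rfl, Or.inl h⟩)

lemma mem_graphLine {V : Type*} {G : SimpleGraph V} {x y z : V} :
    z ∈ graphLine G x y ↔ z = x ∨ z = y ∨ G.dist z y = G.dist z x + G.dist x y ∨
      G.dist x y = G.dist x z + G.dist z y ∨ G.dist x z = G.dist x y + G.dist y z := by
  simp only [graphLine, Set.mem_union, Set.mem_insert_iff, Set.mem_singleton_iff,
    Set.mem_setOf_eq, or_assoc]

lemma graphLine_comm_subset {V : Type*} (G : SimpleGraph V) (x y : V) :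
    graphLine G x y ⊆ graphLine G y x := by
  intro z hz
  rw [mem_graphLine] at hz ⊢
  rcases hz with rfl | rfl | h | h | h
  · exact Or.inr (Or.inl rfl)
  · exact Or.inl rfl
  · refine Or.inr (Or.inr (Or.inr (Or.inr ?_)))
    rw [show G.dist y z = G.dist z y from SimpleGraph.dist_comm,
      show G.dist y x = G.dist x y from SimpleGraph.dist_comm,
      show G.dist x z = G.dist z x from SimpleGraph.dist_comm, h]
    exact Nat.add_comm _ _
  · refine Or.inr (Or.inr (Or.inr (Or.inl ?_)))
    rw [show G.dist x z = G.dist z x from SimpleGraph.dist_comm] at h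
    rw [show G.dist y x = G.dist x y from SimpleGraph.dist_comm,
      show G.dist y z = G.dist z y from SimpleGraph.dist_comm,
      show G.dist z x = G.dist x z from SimpleGraph.dist_comm] at *
    rw [h]
    exact Nat.add_comm _ _
  · refine Or.inr (Or.inr (Or.inl ?_))
    rw [show G.dist x z = G.dist z x from SimpleGraph.dist_comm,
      show G.dist y z = G.dist z y from SimpleGraph.dist_comm] at h
    rw [show G.dist z x = G.dist z x from rfl,
      show G.dist y x = G.dist x y from SimpleGraph.dist_comm, h]
    exact Nat.add_comm _ _

lemma graphLine_comm {V : Type*} (G : SimpleGraph V) (x y : V) :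
    graphLine G x y = graphLine G y x :=
  Set.Subset.antisymm (graphLine_comm_subset G x y) (graphLine_comm_subset G y x)

lemma line_ll {a b : Fin p} (hab : a ≠ b) :
    graphLine (Mgraph p q ps m) (inl a) (inl b) = Lp m a b := by
  ext z
  simp only [graphLine, Lp, Set.mem_union, Set.mem_insert_iff, Set.mem_singleton_iff,
    Set.mem_setOf_eq]
  rcases z with c | u
  · by_cases hca : c = a
    · subst hca; simp
    by_cases hcb : c = b
    · subst hcb; simp
    rw [Mdist_ll hcb, Mdist_ll hca, Mdist_ll hab, Mdist_ll (Ne.symm hca), Mdist_ll (Ne.symm hcb)]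
    simp [hca, hcb]
  · by_cases hua : m u = a
    · subst hua
      rw [Mdist_rl (Ne.symm hab), Mdist_rl_eq, Mdist_ll hab, Mdist_lr_eq,
        Mdist_lr (Ne.symm hab)]
      simp
    by_cases hub : m u = b
    · subst hub
      rw [Mdist_rl_eq, Mdist_rl (Ne.symm hua), Mdist_ll hab, Mdist_lr (Ne.symm hua),
        Mdist_lr_eq]
      simp
    · rw [Mdist_rl (Ne.symm hub), Mdist_rl (Ne.symm hua), Mdist_ll hab,
        Mdist_lr (Ne.symm hua), Mdist_lr (Ne.symm hub)]
      simp [hua, hub]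

lemma line_univ (hm : Function.Injective m) (s : Σ i, Fin (ps i)) :
    graphLine (Mgraph p q ps m) (inl (m s)) (inr s) = Set.univ := by
  ext z
  simp only [graphLine, Set.mem_union, Set.mem_insert_iff, Set.mem_singleton_iff,
    Set.mem_setOf_eq, Set.mem_univ, iff_true]
  rcases z with c | u
  · by_cases hc : c = m s
    · exact Or.inl (Or.inl (by rw [hc]))
    · refine Or.inr (Or.inl ?_)
      rw [Mdist_lr hc, Mdist_ll hc, Mdist_lr_eq]
  · by_cases hus : u = s
    · subst hus; exact Or.inl (Or.inr rfl)
    · have hmu : m u ≠ m s := fun hc => hus (hm hc)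
      by_cases h1 : u.1 = s.1
      · refine Or.inr (Or.inr (Or.inr ?_))
        rw [Mdist_lr (Ne.symm hmu), Mdist_lr_eq, Mdist_rr_same h1.symm (Ne.symm hus)]
      · refine Or.inr (Or.inl ?_)
        rw [Mdist_rr_diff hm h1, Mdist_rl (Ne.symm hmu), Mdist_lr_eq]

lemma line_lr (hm : Function.Injective m) {a : Fin p} {s : Σ i, Fin (ps i)} (ha : a ≠ m s) :
    graphLine (Mgraph p q ps m) (inl a) (inr s) = Lp m a (m s) := by
  ext z
  simp only [graphLine, Lp, Set.mem_union, Set.mem_insert_iff, Set.mem_singleton_iff,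
    Set.mem_setOf_eq]
  rcases z with c | u
  · by_cases hca : c = a
    · subst hca; simp
    by_cases hcm : c = m s
    · subst hcm
      rw [Mdist_lr_eq, Mdist_ll (Ne.symm ha), Mdist_lr ha, Mdist_ll ha, Mdist_rl_eq]
      simp
    · rw [Mdist_lr hcm, Mdist_ll hca, Mdist_lr ha, Mdist_ll (Ne.symm hca), Mdist_rl hcm]
      simp [hca, hcm]
  · by_cases hus : u = s
    · subst hus; simp
    have hmus : m u ≠ m s := fun hc => hus (hm hc)
    by_cases hua : m u = a
    · subst hua
      by_cases h1 : u.1 = s.1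
      · rw [Mdist_rr_same h1 hus, Mdist_rl_eq, Mdist_lr ha, Mdist_lr_eq,
          Mdist_rr_same h1.symm (Ne.symm hus)]
        simp
      · rw [Mdist_rr_diff hm h1, Mdist_rl_eq, Mdist_lr ha, Mdist_lr_eq,
          Mdist_rr_diff hm (fun hc => h1 hc.symm)]
        simp
    · by_cases h1 : u.1 = s.1
      · rw [Mdist_rr_same h1 hus, Mdist_rl (Ne.symm hua), Mdist_lr ha,
          Mdist_lr (Ne.symm hua), Mdist_rr_same h1.symm (Ne.symm hus)]
        simp [hua, hmus, hus]
      · rw [Mdist_rr_diff hm h1, Mdist_rl (Ne.symm hua), Mdist_lr ha,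
          Mdist_lr (Ne.symm hua), Mdist_rr_diff hm (fun hc => h1 hc.symm)]
        simp [hua, hmus, hus]

lemma line_rr (hm : Function.Injective m) {s t : Σ i, Fin (ps i)} (hst : s ≠ t) :
    graphLine (Mgraph p q ps m) (inr s) (inr t) = Lp m (m s) (m t) := by
  have hmst : m s ≠ m t := fun hc => hst (hm hc)
  ext z
  simp only [graphLine, Lp, Set.mem_union, Set.mem_insert_iff, Set.mem_singleton_iff,
    Set.mem_setOf_eq]
  rcases z with c | u
  · by_cases hcs : c = m s
    · subst hcs
      by_cases h1 : s.1 = t.1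
      · rw [Mdist_lr hmst, Mdist_lr_eq, Mdist_rr_same h1 hst, Mdist_rl_eq, Mdist_rl hmst]
        simp
      · rw [Mdist_lr hmst, Mdist_lr_eq, Mdist_rr_diff hm h1, Mdist_rl_eq, Mdist_rl hmst]
        simp
    by_cases hct : c = m t
    · subst hct
      by_cases h1 : s.1 = t.1
      · rw [Mdist_lr_eq, Mdist_lr hcs, Mdist_rr_same h1 hst, Mdist_rl hcs, Mdist_rl_eq]
        simp
      · rw [Mdist_lr_eq, Mdist_lr hcs, Mdist_rr_diff hm h1, Mdist_rl hcs, Mdist_rl_eq]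
        simp
    · by_cases h1 : s.1 = t.1
      · rw [Mdist_lr hct, Mdist_lr hcs, Mdist_rr_same h1 hst, Mdist_rl hcs, Mdist_rl hct]
        simp [hcs, hct]
      · rw [Mdist_lr hct, Mdist_lr hcs, Mdist_rr_diff hm h1, Mdist_rl hcs, Mdist_rl hct]
        simp [hcs, hct]
  · by_cases hus : u = s
    · subst hus; simp
    by_cases hut : u = t
    · subst hut; simp
    have h1' : m u ≠ m s := fun hc => hus (hm hc)
    have h2' : m u ≠ m t := fun hc => hut (hm hc)
    by_cases hu_s : u.1 = s.1
    · by_cases hu_t : u.1 = t.1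
      · rw [Mdist_rr_same hu_t hut, Mdist_rr_same hu_s hus,
          Mdist_rr_same (hu_s.symm.trans hu_t) hst,
          Mdist_rr_same hu_s.symm (Ne.symm hus), Mdist_rr_same hu_t.symm (Ne.symm hut)]
        simp [h1', h2', hus, hut]
      · have hst1 : s.1 ≠ t.1 := fun hc => hu_t (hu_s.trans hc)
        rw [Mdist_rr_diff hm hu_t, Mdist_rr_same hu_s hus, Mdist_rr_diff hm hst1,
          Mdist_rr_same hu_s.symm (Ne.symm hus), Mdist_rr_diff hm (fun hc => hu_t hc.symm)]
        simp [h1', h2', hus, hut]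
    · by_cases hu_t : u.1 = t.1
      · have hst1 : s.1 ≠ t.1 := fun hc => hu_s (hu_t.trans hc.symm)
        rw [Mdist_rr_same hu_t hut, Mdist_rr_diff hm hu_s, Mdist_rr_diff hm hst1,
          Mdist_rr_diff hm (fun hc => hu_s hc.symm), Mdist_rr_same hu_t.symm (Ne.symm hut)]
        simp [h1', h2', hus, hut]
      · by_cases h_st : s.1 = t.1
        · rw [Mdist_rr_diff hm hu_t, Mdist_rr_diff hm hu_s, Mdist_rr_same h_st hst,
            Mdist_rr_diff hm (fun hc => hu_s hc.symm), Mdist_rr_diff hm (fun hc => hu_t hc.symm)]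
          simp [h1', h2', hus, hut]
        · rw [Mdist_rr_diff hm hu_t, Mdist_rr_diff hm hu_s, Mdist_rr_diff hm h_st,
            Mdist_rr_diff hm (fun hc => hu_s hc.symm), Mdist_rr_diff hm (fun hc => hu_t hc.symm)]
          simp [h1', h2', hus, hut]

end Aux

theorem stmt_6 (p q : ℕ) (hp : 3 ≤ p) (hq : 2 ≤ q) (ps : Fin q → ℕ)
    (hps : ∀ i, 1 ≤ ps i) (hsum : ∑ i, ps i ≤ p)
    (m : (Σ i : Fin q, Fin (ps i)) → Fin p) (hm : Function.Injective m) :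
    (graphLines (Mgraph p q ps m)).ncard = p.choose 2 + 1 := by
  classical
  set S : Set (Set (Fin p ⊕ Σ i, Fin (ps i))) :=
    {L | ∃ a b : Fin p, a ≠ b ∧ L = Lp m a b} with hS
  have hcls : graphLines (Mgraph p q ps m) = insert Set.univ S := by
    ext L
    simp only [graphLines, Set.mem_setOf_eq, Set.mem_insert_iff, hS]
    constructor
    · rintro ⟨x, y, hxy, rfl⟩
      rcases x with a | s <;> rcases y with b | t
      · right
        exact ⟨a, b, fun hc => hxy (by rw [hc]), line_ll (fun hc => hxy (by rw [hc]))⟩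
      · by_cases hb : a = m t
        · left; subst hb; exact line_univ hm t
        · right; exact ⟨a, m t, hb, line_lr hm hb⟩
      · rw [graphLine_comm]
        by_cases hb : b = m s
        · left; subst hb; exact line_univ hm s
        · right; exact ⟨b, m s, hb, line_lr hm hb⟩
      · right
        have hst : s ≠ t := fun hc => hxy (by rw [hc])
        exact ⟨m s, m t, fun hc => hst (hm hc), line_rr hm hst⟩
    · rintro (rfl | ⟨a, b, hab, rfl⟩)
      · refine ⟨inl (m ⟨⟨0, by omega⟩, ⟨0, hps _⟩⟩), inr ⟨⟨0, by omega⟩, ⟨0, hps _⟩⟩,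
          by simp, (line_univ hm _).symm⟩
      · exact ⟨inl a, inl b, by simp [hab], (line_ll hab).symm⟩
  have hunivS : Set.univ ∉ S := by
    rintro ⟨a, b, hab, hL⟩
    have hex : ∃ c : Fin p, c ≠ a ∧ c ≠ b := by
      by_contra hcon
      push_neg at hcon
      have hsub : (Finset.univ : Finset (Fin p)) ⊆ {a, b} := by
        intro c _
        rcases eq_or_ne c a with rfl | hca
        · simp
        · simp [hcon c hca]
      have h1 := Finset.card_le_card hsub
      rw [Finset.card_univ, Fintype.card_fin] at h1
      have h2 : ({a, b} : Finset (Fin p)).card ≤ 2 :=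
        le_trans (Finset.card_insert_le _ _) (by simp)
      omega
    obtain ⟨c, hca, hcb⟩ := hex
    have hmem : (inl c : Fin p ⊕ Σ i, Fin (ps i)) ∈ Lp m a b := hL ▸ Set.mem_univ _
    simp [Lp, hca, hcb] at hmem
  have key : ∀ (e e' : Sym2 (Fin p)), ¬e.IsDiag → ¬e'.IsDiag →
      Sym2.lift ⟨Lp m, Lp_comm⟩ e = Sym2.lift ⟨Lp m, Lp_comm⟩ e' → e = e' := by
    intro e e'
    induction e using Sym2.ind with | _ a b => ?_
    induction e' using Sym2.ind with | _ c d => ?_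
    intro he he' hLe
    rw [Sym2.mk_isDiag_iff] at he he'
    simp only [Sym2.lift_mk] at hLe
    have hmem : ∀ x : Fin p, (x = a ∨ x = b) ↔ (x = c ∨ x = d) := by
      intro x
      have h := Set.ext_iff.mp hLe (inl x)
      simpa [Lp] using h
    rw [Sym2.eq_iff]
    have h1 := (hmem a).mp (Or.inl rfl)
    have h2 := (hmem b).mp (Or.inr rfl)
    have h3 := (hmem c).mpr (Or.inl rfl)
    have h4 := (hmem d).mpr (Or.inr rfl)
    rcases h1 with rfl | rfl <;> rcases h2 with rfl | rfl <;> tauto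
  have hSeq : S = (Sym2.lift ⟨Lp m, Lp_comm⟩) '' {e : Sym2 (Fin p) | ¬ e.IsDiag} := by
    ext L
    constructor
    · rintro ⟨a, b, hab, rfl⟩
      exact ⟨s(a, b), by simp [Sym2.mk_isDiag_iff, hab], by simp [Sym2.lift_mk]⟩
    · rintro ⟨e, he, rfl⟩
      rw [Set.mem_setOf_eq] at he
      revert he
      induction e using Sym2.ind with | _ a b => ?_
      intro he
      rw [Sym2.mk_isDiag_iff] at he
      exact ⟨a, b, he, by simp [Sym2.lift_mk]⟩
  have hinj : Set.InjOn (Sym2.lift ⟨Lp m, Lp_comm⟩) {e : Sym2 (Fin p) | ¬ e.IsDiag} :=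
    fun e he e' he' h => key e e' he he' h
  have hcard : ({e : Sym2 (Fin p) | ¬ e.IsDiag}).ncard = p.choose 2 := by
    rw [show {e : Sym2 (Fin p) | ¬ e.IsDiag} = Sym2.diagSetᶜ from rfl,
      ← SimpleGraph.edgeSet_top, Set.ncard_eq_toFinset_card']
    have h := SimpleGraph.card_edgeFinset_top_eq_card_choose_two (V := Fin p)
    rw [Fintype.card_fin] at h
    rw [← h]
    congr 1
  rw [hcls, Set.ncard_insert_of_notMem hunivS (Set.toFinite S), hSeq,
    Set.ncard_image_of_injOn hinj, hcard]
end

section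
/- Let p ≥ 3 and let M'_{2p} be the graph formed by two disjoint copies of K_p joined by a matching of size p−1. Then M'_{2p} has diameter 3 and exactly C(p,2)+1 distinct lines. In particular, ℓ(M'_{2p}) < 2p if and only if p ∈ {3,4}. -/
/-- The graph `M'_{2p}`: two disjoint copies of `K_p` joined by a matching of
size `p - 1` (vertex `a` on the left is matched to vertex `a` on the right,
for every `a` except the last one). -/
def Mgraph' (p : ℕ) : SimpleGraph (Fin p ⊕ Fin p) where
  Adj u v :=
    match u, v with
    | Sum.inl a, Sum.inl b => a ≠ b
    | Sum.inl a, Sum.inr b => a = b ∧ (a : ℕ) + 1 < p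
    | Sum.inr a, Sum.inl b => b = a ∧ (b : ℕ) + 1 < p
    | Sum.inr a, Sum.inr b => a ≠ b
  symm := by
    constructor
    rintro (a | a) (b | b) h
    · exact h.symm
    · exact h
    · exact h
    · exact h.symm
  loopless := by
    constructor
    rintro (a | a) h
    · exact h rfl
    · exact h rfl

section
variable {p : ℕ}

lemma adjLL {a b : Fin p} (h : a ≠ b) : (Mgraph' p).Adj (Sum.inl a) (Sum.inl b) := h
lemma adjRR {a b : Fin p} (h : a ≠ b) : (Mgraph' p).Adj (Sum.inr a) (Sum.inr b) := h
lemma adjLR {a : Fin p} (h : (a : ℕ) + 1 < p) :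
    (Mgraph' p).Adj (Sum.inl a) (Sum.inr a) := ⟨rfl, h⟩

lemma reach_inl0 (hp : 3 ≤ p) (u : Fin p ⊕ Fin p) :
    (Mgraph' p).Reachable u (Sum.inl ⟨0, by omega⟩) := by
  have h0 : ((⟨0, by omega⟩ : Fin p) : ℕ) + 1 < p := by simp; omega
  obtain a | a := u
  · by_cases h : a = ⟨0, by omega⟩
    · exact h ▸ SimpleGraph.Reachable.refl _
    · exact (adjLL h).reachable
  · by_cases h : a = ⟨0, by omega⟩
    · subst h; exact ((adjLR h0).symm).reachable
    · exact ((adjRR h).reachable).trans ((adjLR h0).symm).reachable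

lemma Mconn (hp : 3 ≤ p) : (Mgraph' p).Connected := by
  rw [SimpleGraph.connected_iff]
  refine ⟨fun u v => (reach_inl0 hp u).trans (reach_inl0 hp v).symm, ⟨Sum.inl ⟨0, by omega⟩⟩⟩

end

open Sum

def Dfn (p : ℕ) : Fin p ⊕ Fin p → Fin p ⊕ Fin p → ℕ
  | inl a, inl b => if a = b then 0 else 1
  | inr a, inr b => if a = b then 0 else 1
  | inl a, inr b => if a = b then (if (a : ℕ) + 1 < p then 1 else 3) else 2
  | inr a, inl b => if a = b then (if (a : ℕ) + 1 < p then 1 else 3) else 2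

section
variable {p : ℕ}

lemma dist_le_of_walk {u v : Fin p ⊕ Fin p} (w : (Mgraph' p).Walk u v) :
    (Mgraph' p).dist u v ≤ w.length := SimpleGraph.dist_le w

lemma distLR (hp : 3 ≤ p) (a b : Fin p) :
    (Mgraph' p).dist (inl a) (inr b) = if a = b then (if (a : ℕ) + 1 < p then 1 else 3) else 2 := by
  have hr : (Mgraph' p).Reachable (inl a) (inr b) :=
    (reach_inl0 hp _).trans (reach_inl0 hp _).symm
  have hne : (inl a : Fin p ⊕ Fin p) ≠ inr b := by simp
  have hd0 : (Mgraph' p).dist (inl a) (inr b) ≠ 0 :=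
    SimpleGraph.dist_ne_zero_iff_ne_and_reachable.mpr ⟨hne, hr⟩
  by_cases hab : a = b
  · subst hab
    by_cases hm : (a : ℕ) + 1 < p
    · simp [hm, SimpleGraph.dist_eq_one_iff_adj.mpr (adjLR hm)]
    · -- unmatched: dist = 3
      rw [if_pos rfl, if_neg hm]
      have ha : (a : ℕ) = p - 1 := by have := a.isLt; omega
      have h0m : (⟨0, by omega⟩ : Fin p) ≠ a := by
        intro h; rw [Fin.ext_iff] at h; simp at h; omega
      have h0 : ((⟨0, by omega⟩ : Fin p) : ℕ) + 1 < p := by simp; omega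
      have hle : (Mgraph' p).dist (inl a) (inr a) ≤ 3 := by
        have := dist_le_of_walk (((adjLL (Ne.symm h0m)).toWalk.append
          (adjLR h0).toWalk).append (adjRR h0m).toWalk)
        simpa [SimpleGraph.Walk.length_append] using this
      have hne1 : (Mgraph' p).dist (inl a) (inr a) ≠ 1 := by
        intro h
        obtain ⟨-, h⟩ := SimpleGraph.dist_eq_one_iff_adj.mp h; omega
      have hne2 : (Mgraph' p).dist (inl a) (inr a) ≠ 2 := by
        intro h2
        obtain ⟨w, hw⟩ := SimpleGraph.exists_walk_of_dist_ne_zero hd0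
        rw [h2] at hw
        match w, hw with
        | SimpleGraph.Walk.cons' _ z _ h1 (SimpleGraph.Walk.cons' _ _ _ h2' SimpleGraph.Walk.nil), _ =>
          obtain c | c := z
          · obtain ⟨h, hc⟩ := h2'; subst h; omega
          · obtain ⟨h, hc⟩ := h1; subst h; omega
      omega
  · -- a ≠ b : dist = 2
    simp only [if_neg hab]
    have hne1 : (Mgraph' p).dist (inl a) (inr b) ≠ 1 := by
      intro h
      obtain ⟨h, -⟩ := SimpleGraph.dist_eq_one_iff_adj.mp h; exact hab h
    have hle : (Mgraph' p).dist (inl a) (inr b) ≤ 2 := by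
      by_cases hm : (b : ℕ) + 1 < p
      · have := dist_le_of_walk ((adjLL hab).toWalk.append (adjLR hm).toWalk)
        simpa [SimpleGraph.Walk.length_append] using this
      · have hm' : (a : ℕ) + 1 < p := by
          have := a.isLt; have := b.isLt
          rcases Nat.lt_or_ge ((a:ℕ)+1) p with h | h
          · exact h
          · exfalso; apply hab; apply Fin.ext; omega
        have := dist_le_of_walk ((adjLR hm').toWalk.append (adjRR hab).toWalk)
        simpa [SimpleGraph.Walk.length_append] using this
    omega

lemma distLL (a b : Fin p) :
    (Mgraph' p).dist (inl a) (inl b) = if a = b then 0 else 1 := by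
  by_cases hab : a = b
  · simp [hab]
  · simp [hab, SimpleGraph.dist_eq_one_iff_adj.mpr (adjLL hab)]

lemma distRR (a b : Fin p) :
    (Mgraph' p).dist (inr a) (inr b) = if a = b then 0 else 1 := by
  by_cases hab : a = b
  · simp [hab]
  · simp [hab, SimpleGraph.dist_eq_one_iff_adj.mpr (adjRR hab)]

lemma distRL (hp : 3 ≤ p) (a b : Fin p) :
    (Mgraph' p).dist (inr a) (inl b) = if a = b then (if (a : ℕ) + 1 < p then 1 else 3) else 2 := by
  rw [SimpleGraph.dist_comm, distLR hp]
  by_cases hab : a = b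
  · subst hab; simp
  · simp [hab, Ne.symm hab]

lemma dist_eq (hp : 3 ≤ p) (u v : Fin p ⊕ Fin p) :
    (Mgraph' p).dist u v = Dfn p u v := by
  obtain a | a := u <;> obtain b | b := v
  · exact distLL a b
  · exact distLR hp a b
  · exact distRL hp a b
  · exact distRR a b

end

section
variable {p : ℕ}

lemma line_eval (hp : 3 ≤ p) (x y : Fin p ⊕ Fin p) :
    graphLine (Mgraph' p) x y = {x, y} ∪ {z | Dfn p z y = Dfn p z x + Dfn p x y ∨
      Dfn p x y = Dfn p x z + Dfn p z y ∨ Dfn p x z = Dfn p x y + Dfn p y z} := by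
  simp only [graphLine, dist_eq hp]

lemma line_LL (hp : 3 ≤ p) {a b : Fin p} (hab : a ≠ b) :
    graphLine (Mgraph' p) (Sum.inl a) (Sum.inl b) =
      ({Sum.inl a, Sum.inl b, Sum.inr a, Sum.inr b} : Set (Fin p ⊕ Fin p)) := by
  have ha := a.isLt; have hb := b.isLt
  rw [line_eval hp]
  ext z
  obtain c | c := z <;> have hc := c.isLt <;>
    simp only [Set.mem_union, Set.mem_insert_iff, Set.mem_singleton_iff, Set.mem_setOf_eq,
      Dfn, Sum.inl.injEq, Sum.inr.injEq, reduceCtorEq, false_or, or_false,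
      Fin.ext_iff] at * <;>
    split_ifs <;> omega

lemma line_RR (hp : 3 ≤ p) {a b : Fin p} (hab : a ≠ b) :
    graphLine (Mgraph' p) (Sum.inr a) (Sum.inr b) =
      ({Sum.inl a, Sum.inl b, Sum.inr a, Sum.inr b} : Set (Fin p ⊕ Fin p)) := by
  have ha := a.isLt; have hb := b.isLt
  rw [line_eval hp]
  ext z
  obtain c | c := z <;> have hc := c.isLt <;>
    simp only [Set.mem_union, Set.mem_insert_iff, Set.mem_singleton_iff, Set.mem_setOf_eq,
      Dfn, Sum.inl.injEq, Sum.inr.injEq, reduceCtorEq, false_or, or_false,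
      Fin.ext_iff] at * <;>
    split_ifs <;> omega

lemma line_LR (hp : 3 ≤ p) {a b : Fin p} (hab : a ≠ b) :
    graphLine (Mgraph' p) (Sum.inl a) (Sum.inr b) =
      ({Sum.inl a, Sum.inl b, Sum.inr a, Sum.inr b} : Set (Fin p ⊕ Fin p)) := by
  have ha := a.isLt; have hb := b.isLt
  rw [line_eval hp]
  ext z
  obtain c | c := z <;> have hc := c.isLt <;>
    simp only [Set.mem_union, Set.mem_insert_iff, Set.mem_singleton_iff, Set.mem_setOf_eq,
      Dfn, Sum.inl.injEq, Sum.inr.injEq, reduceCtorEq, false_or, or_false,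
      Fin.ext_iff] at * <;>
    split_ifs <;> omega

lemma line_RL (hp : 3 ≤ p) {a b : Fin p} (hab : a ≠ b) :
    graphLine (Mgraph' p) (Sum.inr a) (Sum.inl b) =
      ({Sum.inl a, Sum.inl b, Sum.inr a, Sum.inr b} : Set (Fin p ⊕ Fin p)) := by
  have ha := a.isLt; have hb := b.isLt
  rw [line_eval hp]
  ext z
  obtain c | c := z <;> have hc := c.isLt <;>
    simp only [Set.mem_union, Set.mem_insert_iff, Set.mem_singleton_iff, Set.mem_setOf_eq,
      Dfn, Sum.inl.injEq, Sum.inr.injEq, reduceCtorEq, false_or, or_false,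
      Fin.ext_iff] at * <;>
    split_ifs <;> omega

lemma line_match (hp : 3 ≤ p) (a : Fin p) :
    graphLine (Mgraph' p) (Sum.inl a) (Sum.inr a) = Set.univ := by
  have ha := a.isLt
  rw [line_eval hp]
  ext z
  obtain c | c := z <;> have hc := c.isLt <;>
    simp only [Set.mem_union, Set.mem_insert_iff, Set.mem_singleton_iff, Set.mem_setOf_eq,
      Dfn, Sum.inl.injEq, Sum.inr.injEq, reduceCtorEq, false_or, or_false,
      Set.mem_univ, iff_true, Fin.ext_iff] at * <;>
    split_ifs <;> omega

end

section
variable {p : ℕ}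

def fsetV (p : ℕ) (s : Finset (Fin p)) : Set (Fin p ⊕ Fin p) :=
  Sum.inl '' ↑s ∪ Sum.inr '' ↑s

lemma fsetV_pair (a b : Fin p) :
    fsetV p {a, b} = ({Sum.inl a, Sum.inl b, Sum.inr a, Sum.inr b} : Set (Fin p ⊕ Fin p)) := by
  ext z
  obtain c | c := z <;> simp [fsetV] <;> tauto

lemma fsetV_inj : Function.Injective (fsetV p) := by
  intro s t h
  ext c
  have : Sum.inl c ∈ fsetV p s ↔ Sum.inl c ∈ fsetV p t := by rw [h]
  simpa [fsetV] using this

lemma line_match' (hp : 3 ≤ p) (a : Fin p) :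
    graphLine (Mgraph' p) (Sum.inr a) (Sum.inl a) = Set.univ := by
  have ha := a.isLt
  rw [line_eval hp]
  ext z
  obtain c | c := z <;> have hc := c.isLt <;>
    simp only [Set.mem_union, Set.mem_insert_iff, Set.mem_singleton_iff, Set.mem_setOf_eq,
      Dfn, Sum.inl.injEq, Sum.inr.injEq, reduceCtorEq, false_or, or_false,
      Set.mem_univ, iff_true, Fin.ext_iff] at * <;>
    split_ifs <;> omega

lemma lines_eq (hp : 3 ≤ p) :
    graphLines (Mgraph' p) =
      insert Set.univ (fsetV p '' ↑(Finset.powersetCard 2 (Finset.univ : Finset (Fin p)))) := by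
  ext l
  constructor
  · rintro ⟨x, y, hxy, rfl⟩
    have pair : ∀ a b : Fin p, a ≠ b →
        ({Sum.inl a, Sum.inl b, Sum.inr a, Sum.inr b} : Set (Fin p ⊕ Fin p)) ∈
          insert Set.univ (fsetV p '' ↑(Finset.powersetCard 2 (Finset.univ : Finset (Fin p)))) := by
      intro a b hab
      refine Set.mem_insert_iff.mpr (Or.inr ⟨{a, b}, ?_, fsetV_pair a b⟩)
      simp [Finset.mem_powersetCard_univ, Finset.card_insert_of_notMem, hab]
    obtain a | a := x <;> obtain b | b := y
    · exact (line_LL hp (by simpa using hxy)) ▸ pair a b (by simpa using hxy)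
    · by_cases hab : a = b
      · subst hab
        rw [line_match hp]
        exact Set.mem_insert _ _
      · exact (line_LR hp hab) ▸ pair a b hab
    · by_cases hab : a = b
      · subst hab
        rw [line_match' hp]
        exact Set.mem_insert _ _
      · exact (line_RL hp hab) ▸ pair a b hab
    · exact (line_RR hp (by simpa using hxy)) ▸ pair a b (by simpa using hxy)
  · intro hl
    rcases Set.mem_insert_iff.mp hl with rfl | ⟨s, hs, rfl⟩
    · exact ⟨Sum.inl ⟨0, by omega⟩, Sum.inr ⟨0, by omega⟩, by simp,
        (line_match hp ⟨0, by omega⟩).symm⟩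
    · rw [Finset.mem_coe, Finset.mem_powersetCard_univ] at hs
      obtain ⟨a, b, hab, rfl⟩ := Finset.card_eq_two.mp hs
      exact ⟨Sum.inl a, Sum.inl b, by simpa using hab,
        by rw [line_LL hp hab, fsetV_pair]⟩

lemma lines_ncard (hp : 3 ≤ p) : (graphLines (Mgraph' p)).ncard = p.choose 2 + 1 := by
  rw [lines_eq hp]
  have hinj : Set.InjOn (fsetV p)
      ↑(Finset.powersetCard 2 (Finset.univ : Finset (Fin p))) := fsetV_inj.injOn
  have hfin : (fsetV p '' ↑(Finset.powersetCard 2 (Finset.univ : Finset (Fin p)))).Finite :=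
    (Finset.finite_toSet _).image _
  have huniv : Set.univ ∉ fsetV p '' ↑(Finset.powersetCard 2 (Finset.univ : Finset (Fin p))) := by
    rintro ⟨s, hs, heq⟩
    rw [Finset.mem_coe, Finset.mem_powersetCard_univ] at hs
    have hne : ¬ (Finset.univ : Finset (Fin p)) ⊆ s := by
      intro h
      have := Finset.card_le_card h
      simp only [Finset.card_univ, Fintype.card_fin, hs] at this
      omega
    obtain ⟨c, -, hc⟩ := Finset.not_subset.mp hne
    have : Sum.inl c ∈ fsetV p s := heq.symm ▸ Set.mem_univ _
    simp only [fsetV, Set.mem_union, Set.mem_image, Finset.mem_coe] at this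
    rcases this with ⟨d, hd, h⟩ | ⟨d, hd, h⟩
    · exact hc (by cases h; exact hd)
    · exact absurd h (by simp)
  rw [Set.ncard_insert_of_notMem huniv hfin, Set.ncard_image_of_injOn hinj,
    Set.ncard_coe_finset, Finset.card_powersetCard]
  simp

end

theorem stmt_7 (p : ℕ) (hp : 3 ≤ p) :
    (Mgraph' p).Connected ∧ (∀ u v, (Mgraph' p).dist u v ≤ 3) ∧
      (∃ u v, (Mgraph' p).dist u v = 3) ∧
      (graphLines (Mgraph' p)).ncard = p.choose 2 + 1 ∧
      ((graphLines (Mgraph' p)).ncard < 2 * p ↔ p = 3 ∨ p = 4) := by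
  refine ⟨Mconn hp, ?_, ?_, lines_ncard hp, ?_⟩
  · intro u v
    rw [dist_eq hp]
    obtain a | a := u <;> obtain b | b := v <;> simp only [Dfn] <;> split_ifs <;> omega
  · refine ⟨Sum.inl ⟨p - 1, by omega⟩, Sum.inr ⟨p - 1, by omega⟩, ?_⟩
    rw [dist_eq hp]
    simp only [Dfn]
    rw [if_pos trivial, if_neg (by omega)]
  · rw [lines_ncard hp, Nat.choose_two_right]
    constructor
    · intro h
      by_contra h'
      push_neg at h'
      have hp5 : 5 ≤ p := by omega
      have h4 : 4 * p ≤ p * (p - 1) := by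
        calc 4 * p = p * 4 := by ring
        _ ≤ p * (p - 1) := Nat.mul_le_mul_left p (by omega)
      have : 2 * p ≤ p * (p - 1) / 2 := (Nat.le_div_iff_mul_le (by norm_num)).mpr (by omega)
      omega
    · rintro (rfl | rfl) <;> norm_num
end

section
/- Let G be a connected graph and x a vertex such that the set of lines through x, L^x = {line(x,y) : y ≠ x}, has at least 2 elements. Then the total number of distinct lines of G satisfies ℓ(G) ≥ |L^x| + 1. -/
lemma line_symm_mem {V : Type*} (G : SimpleGraph V) (x y z : V)
    (h : z ∈ graphLine G x y) : x ∈ graphLine G y z := by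
  simp only [graphLine, Set.mem_union, Set.mem_insert_iff, Set.mem_singleton_iff,
    Set.mem_setOf_eq] at h ⊢
  have dc : ∀ a b : V, G.dist a b = G.dist b a := fun a b => SimpleGraph.dist_comm
  rcases h with (h | h) | (h | h | h)
  · left; right; exact h.symm
  · subst h; right; left; simp
  · right; right; left
    rw [dc y z, dc y x, dc x z]; omega
  · right; right; right
    rw [dc y x, dc y z, dc z x]; omega
  · right; left; exact h

lemma x_mem_line {V : Type*} (G : SimpleGraph V) (x y : V) : x ∈ graphLine G x y := by
  left; left; rfl

theorem stmt_8 {V : Type*} [Fintype V] (G : SimpleGraph V) (hconn : G.Connected)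
    (x : V) (h2 : 2 ≤ {l | ∃ y : V, y ≠ x ∧ l = graphLine G x y}.ncard) :
    {l | ∃ y : V, y ≠ x ∧ l = graphLine G x y}.ncard + 1 ≤ (graphLines G).ncard := by
  classical
  set S : Set (Set V) := {l | ∃ y : V, y ≠ x ∧ l = graphLine G x y} with hS
  have hSfin : S.Finite := Set.toFinite _
  have hGfin : (graphLines G).Finite := Set.toFinite _
  -- get two distinct lines through x
  obtain ⟨L1, L2, hL1, hL2, hne⟩ := (Set.one_lt_ncard_iff hSfin).mp h2
  -- one of them is not univ
  have hex : ∃ L ∈ S, L ≠ Set.univ := by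
    by_contra hc
    push_neg at hc
    exact hne ((hc L1 hL1).trans (hc L2 hL2).symm)
  obtain ⟨L, hLS, hLne⟩ := hex
  obtain ⟨y, hyx, rfl⟩ := hLS
  have hz : ∃ z, z ∉ graphLine G x y := by
    by_contra hc
    push_neg at hc
    exact hLne (Set.eq_univ_of_forall hc)
  obtain ⟨z, hz⟩ := hz
  have hzy : z ≠ y := fun h => hz (h ▸ (by left; right; rfl))
  have hxnot : x ∉ graphLine G y z := fun h => hz (line_symm_mem G z x y (line_symm_mem G y z x h))
  -- the new line
  have hnew : graphLine G y z ∉ S := by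
    rintro ⟨y', hy', heq⟩
    exact hxnot (heq ▸ x_mem_line G x y')
  have hsub : insert (graphLine G y z) S ⊆ graphLines G := by
    rintro l (rfl | ⟨y', hy', rfl⟩)
    · exact ⟨y, z, fun h => hzy h.symm, rfl⟩
    · exact ⟨x, y', fun h => hy' h.symm, rfl⟩
  calc S.ncard + 1 = (insert (graphLine G y z) S).ncard := by
        rw [Set.ncard_insert_of_notMem hnew hSfin]
    _ ≤ (graphLines G).ncard := Set.ncard_le_ncard hsub hGfin
end

section
/- Let G be a connected graph on n ≥ 3 vertices with fewer than n distinct lines. Then for every vertex x, the number of distinct lines through x, |{line(x,y) : y ≠ x}|, is strictly less than n−1. -/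
theorem stmt_9 {V : Type*} [Fintype V] (G : SimpleGraph V) (hconn : G.Connected)
    (hn : 3 ≤ Fintype.card V) (hfew : (graphLines G).ncard < Fintype.card V) :
    ∀ x : V, {l | ∃ y : V, y ≠ x ∧ l = graphLine G x y}.ncard < Fintype.card V - 1 := by
  intro x
  set S : Set (Set V) := {l | ∃ y : V, y ≠ x ∧ l = graphLine G x y} with hS
  have hsub : S ⊆ graphLines G := by
    rintro l ⟨y, hy, rfl⟩
    exact ⟨x, y, hy.symm, rfl⟩
  have hfin : (graphLines G).Finite := Set.toFinite _
  have hle : S.ncard ≤ (graphLines G).ncard := Set.ncard_le_ncard hsub hfin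
  by_contra hcon
  push_neg at hcon
  have heq : S = graphLines G := Set.eq_of_subset_of_ncard_le hsub (by omega) hfin
  have hxmem : ∀ l ∈ graphLines G, x ∈ l := by
    intro l hl
    rw [← heq] at hl
    obtain ⟨y, hy, rfl⟩ := hl
    exact Or.inl (Set.mem_insert _ _)
  have huniv : ∀ y : V, y ≠ x → graphLine G x y = Set.univ := by
    intro y hy
    ext v
    simp only [Set.mem_univ, iff_true]
    by_cases hvx : v = x
    · subst hvx; exact Or.inl (Set.mem_insert _ _)
    by_cases hvy : v = y
    · subst hvy; exact Or.inl (Set.mem_insert_of_mem _ rfl)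
    have hx : x ∈ graphLine G v y := hxmem _ ⟨v, y, hvy, rfl⟩
    rcases hx with hx | hx
    · rcases hx with hx | hx
      · exact absurd hx.symm hvx
      · exact absurd hx.symm hy
    · right
      simp only [Set.mem_setOf_eq] at hx ⊢
      rcases hx with h1 | h2 | h3
      · exact Or.inr (Or.inl h1)
      · exact Or.inl h2
      · right; right
        simpa [SimpleGraph.dist_comm, Nat.add_comm] using h3
  have hsing : S ⊆ {Set.univ} := by
    rintro l ⟨y, hy, rfl⟩
    simp [huniv y hy]
  have h1 : S.ncard ≤ 1 := by
    calc S.ncard ≤ ({Set.univ} : Set (Set V)).ncard :=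
          Set.ncard_le_ncard hsing (Set.finite_singleton _)
      _ = 1 := Set.ncard_singleton _
  omega
end

section
/- Let G be a connected graph of diameter 3 and x a vertex. Define A(x) = {w ∈ N^3(x) : line(x,w) = line(x,v) for some v ∈ N^2(x)} and B(x) = {v ∈ N^2(x) : line(x,v) = line(x,w) for some w ∈ N^3(x)}. Then the function f : A(x) → B(x) assigning to each w ∈ A(x) the unique v ∈ N^2(x) with line(x,v) = line(x,w) is well defined and bijective. -/
lemma line_unique {V : Type*} {G : SimpleGraph V} (hconn : G.Connected)
    (hdiam : ∀ a b : V, G.dist a b ≤ 3) {x v v' : V} {d : ℕ} (hd : 2 ≤ d)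
    (h1 : G.dist x v = d) (h2 : G.dist x v' = d)
    (hmem : v' ∈ graphLine G x v) : v' = v := by
  rcases hmem with h | h
  · rcases h with h | h
    · exfalso; subst h; simp [SimpleGraph.dist_self] at h2; omega
    · exact h
  · simp only [Set.mem_setOf_eq] at h
    rcases h with h | h | h
    · exfalso
      rw [SimpleGraph.dist_comm (u := v') (v := x), h2, h1] at h
      have := hdiam v' v
      omega
    · rw [h2] at h
      have : G.dist v' v = 0 := by omega
      exact (hconn.dist_eq_zero_iff.mp this)
    · rw [h1, h2] at h
      have : G.dist v v' = 0 := by omega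
      exact (hconn.dist_eq_zero_iff.mp this).symm

lemma self_mem_line {V : Type*} (G : SimpleGraph V) (x y : V) :
    y ∈ graphLine G x y := Or.inl (Or.inr rfl)

theorem stmt_10 {V : Type*} (G : SimpleGraph V) (hconn : G.Connected)
    (hdiam : ∀ a b : V, G.dist a b ≤ 3) (hex : ∃ a b : V, G.dist a b = 3)
    (x : V)
    (A : Set V) (hA : A = {w | G.dist x w = 3 ∧
      ∃ v, G.dist x v = 2 ∧ graphLine G x v = graphLine G x w})
    (B : Set V) (hB : B = {v | G.dist x v = 2 ∧
      ∃ w, G.dist x w = 3 ∧ graphLine G x w = graphLine G x v}) :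
    ∃ f : V → V, Set.BijOn f A B ∧
      (∀ w ∈ A, G.dist x (f w) = 2 ∧ graphLine G x (f w) = graphLine G x w) ∧
      (∀ w ∈ A, ∀ v, G.dist x v = 2 → graphLine G x v = graphLine G x w → v = f w) := by
  classical
  set f : V → V := fun w =>
    if h : ∃ v, G.dist x v = 2 ∧ graphLine G x v = graphLine G x w then h.choose else x
    with hf
  have hfA : ∀ w ∈ A, G.dist x (f w) = 2 ∧ graphLine G x (f w) = graphLine G x w := by
    intro w hw
    rw [hA] at hw
    obtain ⟨hw3, hv⟩ := hw
    simp only [hf, dif_pos hv]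
    exact hv.choose_spec
  have huniq : ∀ w ∈ A, ∀ v, G.dist x v = 2 → graphLine G x v = graphLine G x w → v = f w := by
    intro w hw v hv2 hvl
    obtain ⟨hf2, hfl⟩ := hfA w hw
    have : v ∈ graphLine G x (f w) := by
      rw [hfl, ← hvl]; exact self_mem_line G x v
    exact line_unique hconn hdiam (le_refl 2) hf2 hv2 this
  refine ⟨f, ⟨?_, ?_, ?_⟩, hfA, huniq⟩
  · -- maps to
    intro w hw
    obtain ⟨hf2, hfl⟩ := hfA w hw
    rw [hA] at hw
    rw [hB]
    exact ⟨hf2, w, hw.1, hfl.symm⟩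
  · -- injective
    intro w hw w' hw' heq
    have h1 := hfA w hw
    have h2 := hfA w' hw'
    rw [hA] at hw hw'
    have hll : graphLine G x w = graphLine G x w' := by
      rw [← h1.2, heq, h2.2]
    have : w ∈ graphLine G x w' := by rw [← hll]; exact self_mem_line G x w
    exact line_unique hconn hdiam (by norm_num) hw'.1 hw.1 this
  · -- surjective
    intro v hv
    rw [hB] at hv
    obtain ⟨hv2, w, hw3, hwl⟩ := hv
    have hwA : w ∈ A := by rw [hA]; exact ⟨hw3, v, hv2, hwl.symm⟩
    refine ⟨w, hwA, (huniq w hwA v hv2 hwl.symm).symm⟩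
end

section
/- Let G be a connected graph of diameter 3 and x a vertex. Suppose w ∈ N^3(x) and v ∈ N^2(x) satisfy line(x,w) = line(x,v). Then w and v are adjacent, v is the unique neighbor of w in N^2(x), and w is the unique neighbor of v in N^3(x). -/
theorem stmt_11 {V : Type*} (G : SimpleGraph V) (hconn : G.Connected)
    (hdiam : ∀ a b : V, G.dist a b ≤ 3) (hex : ∃ a b : V, G.dist a b = 3)
    (x w v : V) (hw : G.dist x w = 3) (hv : G.dist x v = 2)
    (hline : graphLine G x w = graphLine G x v) :
    G.Adj w v ∧ (∀ v', G.dist x v' = 2 → G.Adj w v' → v' = v) ∧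
      (∀ w', G.dist x w' = 3 → G.Adj v w' → w' = w) := by
  have hz : ∀ a b : V, G.dist a b = 0 ↔ a = b := fun a b => hconn.dist_eq_zero_iff
  have hadjwv : G.Adj w v := by
    have hvmem : v ∈ graphLine G x w := by
      rw [hline]; left; right; rfl
    rcases hvmem with h | h
    · rcases h with h | h
      · exfalso; rw [show v = x from h] at hv; simp [SimpleGraph.dist_self] at hv
      · exfalso
        have : G.dist x v = G.dist x w := by rw [show v = w from h]
        omega
    · simp only [Set.mem_setOf_eq] at h
      have hvx : G.dist v x = G.dist x v := SimpleGraph.dist_comm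
      have hdvw : G.dist v w = 1 := by
        have h1 := hdiam v w
        have h2 := hdiam x v
        rcases h with h | h | h
        · omega
        · omega
        · have := (hz w v).mp (by omega)
          exfalso; rw [this] at hw; omega
      exact SimpleGraph.dist_eq_one_iff_adj.mp (by rwa [SimpleGraph.dist_comm])
  refine ⟨hadjwv, ?_, ?_⟩
  · intro v' hv' hadj
    have h1 : G.dist w v' = 1 := SimpleGraph.dist_eq_one_iff_adj.mpr hadj
    have hmem : v' ∈ graphLine G x w := by
      right
      simp only [Set.mem_setOf_eq]
      right; left
      rw [show G.dist v' w = 1 from by rwa [SimpleGraph.dist_comm]]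
      omega
    rw [hline] at hmem
    rcases hmem with h | h
    · rcases h with h | h
      · exfalso; rw [show v' = x from h] at hv'; simp [SimpleGraph.dist_self] at hv'
      · exact h
    · simp only [Set.mem_setOf_eq] at h
      have hd1 := hdiam v' v
      have hvx : G.dist v' x = G.dist x v' := SimpleGraph.dist_comm
      rcases h with h | h | h
      · omega
      · exact (hz v' v).mp (by omega)
      · have := (hz v v').mp (by omega)
        exact this.symm
  · intro w' hw' hadj
    have h1 : G.dist v w' = 1 := SimpleGraph.dist_eq_one_iff_adj.mpr hadj
    have hmem : w' ∈ graphLine G x v := by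
      right
      simp only [Set.mem_setOf_eq]
      right; right
      rw [show G.dist v w' = 1 from h1]
      omega
    rw [← hline] at hmem
    rcases hmem with h | h
    · rcases h with h | h
      · exfalso; rw [show w' = x from h] at hw'; simp [SimpleGraph.dist_self] at hw'
      · exact h
    · simp only [Set.mem_setOf_eq] at h
      have hd1 := hdiam w' w
      have hd2 := hdiam x w'
      have hvx : G.dist w' x = G.dist x w' := SimpleGraph.dist_comm
      rcases h with h | h | h
      · omega
      · exact (hz w' w).mp (by omega)
      · exact ((hz w w').mp (by omega)).symm
end

section
/- Let G be a connected graph of diameter 3 and x, y, w vertices with d(x,w)=3, y a neighbor of x with d(y,w)=2, and suppose there exists v ∈ N^2(x) with line(w,y) = line(x,v). Then v ∈ N(w) ∩ N(y), d(w,v)=1, and moreover every neighbor u of x with u ≠ y and d(u,w) ≤ 2 satisfies d(v,u)=2. -/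
lemma mem_graphLine_iff {V : Type*} (G : SimpleGraph V) (a b z : V) :
    z ∈ graphLine G a b ↔ z = a ∨ z = b ∨
      (G.dist z b = G.dist z a + G.dist a b ∨
       G.dist a b = G.dist a z + G.dist z b ∨
       G.dist a z = G.dist a b + G.dist b z) := by
  simp [graphLine, or_assoc]

theorem stmt_12 {V : Type*} (G : SimpleGraph V) (hconn : G.Connected)
    (hdiam : ∀ a b : V, G.dist a b ≤ 3)
    (x w y v : V) (hxw : G.dist x w = 3) (hxy : G.Adj x y) (hyw : G.dist y w = 2)
    (hv : G.dist x v = 2) (hline : graphLine G w y = graphLine G x v) :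
    G.Adj w v ∧ G.Adj y v ∧ G.dist w v = 1 ∧
      ∀ u, G.Adj x u → u ≠ y → G.dist u w ≤ 2 → G.dist v u = 2 := by
  have dcomm : ∀ a b : V, G.dist a b = G.dist b a := fun a b => G.dist_comm
  have tri : ∀ a b c : V, G.dist a c ≤ G.dist a b + G.dist b c :=
    fun a b c => hconn.dist_triangle
  have dzero : ∀ a b : V, G.dist a b = 0 ↔ a = b := fun a b => hconn.dist_eq_zero_iff
  have dxy : G.dist x y = 1 := SimpleGraph.dist_eq_one_iff_adj.mpr hxy
  have dwy : G.dist w y = 2 := by rw [dcomm]; exact hyw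
  -- find z on a shortest path from y to w
  obtain ⟨p, hp⟩ : ∃ p : G.Walk y w, p.length = G.dist y w :=
    SimpleGraph.exists_walk_of_dist_ne_zero (by omega)
  have hzfact : ∃ z : V, G.dist y z = 1 ∧ G.dist z w = 1 := by
    cases p with
    | nil => rw [hyw] at hp; simp at hp
    | cons hadj q =>
      rename_i z
      refine ⟨z, SimpleGraph.dist_eq_one_iff_adj.mpr hadj, ?_⟩
      have h1 : G.dist z w ≤ q.length := SimpleGraph.dist_le q
      have h2 : G.dist y w ≤ G.dist y z + G.dist z w := tri y z w
      have h3 : G.dist y z = 1 := SimpleGraph.dist_eq_one_iff_adj.mpr hadj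
      simp at hp
      omega
  obtain ⟨z, dyz, dzw⟩ := hzfact
  have dxz : G.dist x z = 2 := by
    have h1 := tri x y z
    have h2 := tri x z w
    omega
  -- v is in line(w,y)
  have hvmem : v ∈ graphLine G w y := by
    rw [hline, mem_graphLine_iff]; right; left; rfl
  rw [mem_graphLine_iff] at hvmem
  have hvw3 : G.dist v w ≤ 3 := hdiam v w
  have hvy3 : G.dist v y ≤ 3 := hdiam v y
  have hdvw : G.dist w v = G.dist v w := dcomm w v
  have hdvy : G.dist y v = G.dist v y := dcomm y v
  -- rule out v = w, v = y
  have hvnw : v ≠ w := by rintro rfl; omega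
  have hvny : v ≠ y := by rintro rfl; omega
  -- main case analysis
  have key : G.dist v w = 1 ∧ G.dist v y = 1 := by
    rcases hvmem with h | h | h | h | h
    · exact absurd h hvnw
    · exact absurd h hvny
    · -- d v y = d v w + 2 : case (a), derive contradiction via z
      exfalso
      have hvw0 : G.dist v w ≠ 0 := fun h0 => hvnw ((dzero v w).mp h0)
      have hvw1 : G.dist v w = 1 := by omega
      have hvy3' : G.dist v y = 3 := by omega
      have hzmem : z ∈ graphLine G w y := by
        rw [mem_graphLine_iff]; right; right; right; left
        rw [dcomm w z, dcomm z y]; omega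
      rw [hline, mem_graphLine_iff] at hzmem
      have dvz : G.dist v z = 2 := by
        have h1 := tri v w z
        have h2 := tri v z y
        have c : G.dist z y = G.dist y z := dcomm z y
        rw [dcomm w z] at h1
        omega
      have c1 : G.dist z v = G.dist v z := dcomm z v
      have c2 : G.dist z x = G.dist x z := dcomm z x
      rcases hzmem with h' | h' | h' | h' | h'
      · have := (dzero x z).mpr h'.symm; omega
      · have := (dzero v z).mpr h'.symm; omega
      · omega
      · omega
      · omega
    · -- 2 = d w v + d v y  : the good case
      have h1 : 1 ≤ G.dist w v := by
        rw [hdvw]; by_contra hc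
        have : G.dist v w = 0 := by omega
        exact hvnw ((dzero v w).mp this)
      have h2 : 1 ≤ G.dist v y := by
        by_contra hc
        have : G.dist v y = 0 := by omega
        exact hvny ((dzero v y).mp this)
      omega
    · -- d w v = 2 + d y v : case (c), contradiction via w ∈ line(x,v)
      exfalso
      have hwmem : w ∈ graphLine G w y := by
        rw [mem_graphLine_iff]; left; rfl
      rw [hline, mem_graphLine_iff] at hwmem
      have c1 : G.dist w x = G.dist x w := dcomm w x
      have c2 : G.dist x w = G.dist w x := dcomm x w
      rcases hwmem with h' | h' | h' | h' | h'
      · have := (dzero x w).mpr h'.symm; omega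
      · have := (dzero v w).mpr h'.symm; omega
      · omega
      · omega
      · omega
  obtain ⟨kvw, kvy⟩ := key
  refine ⟨SimpleGraph.dist_eq_one_iff_adj.mp (by omega), ?_, by omega, ?_⟩
  · exact SimpleGraph.dist_eq_one_iff_adj.mp (by omega)
  · intro u hxu huy huw
    have dxu : G.dist x u = 1 := SimpleGraph.dist_eq_one_iff_adj.mpr hxu
    have duw2 : G.dist u w = 2 := by
      have := tri x u w; omega
    have cuv : G.dist u v = G.dist v u := dcomm u v
    have cux : G.dist u x = G.dist x u := dcomm u x
    have hvu1 : 1 ≤ G.dist v u := by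
      have := tri x u v
      by_contra hc
      have h0 : G.dist u v = 0 := by omega
      have := (dzero u v).mp h0
      subst this
      omega
    have hvu3 : G.dist v u ≤ 3 := hdiam v u
    by_contra hne2
    -- then d v u = 1 or 3, so u ∈ line(x,v) = line(w,y)
    have hum : u ∈ graphLine G x v := by
      rw [mem_graphLine_iff]
      rcases (by omega : G.dist v u = 1 ∨ G.dist v u = 3) with h | h
      · right; right; right; left; omega
      · right; right; left; omega
    rw [← hline, mem_graphLine_iff] at hum
    have cuy : G.dist u y = G.dist y u := dcomm u y
    have cuw : G.dist u w = G.dist w u := dcomm u w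
    have duy1 : 1 ≤ G.dist u y := by
      by_contra hc
      exact huy ((dzero u y).mp (by omega))
    have duy2 : G.dist u y ≤ 2 := by
      have := tri u x y; omega
    rcases hum with h' | h' | h' | h' | h'
    · have := (dzero u w).mpr h'; omega
    · exact huy h'
    · omega
    · omega
    · omega
end

section
/- In any connected graph, if e = xy is a bridge, then the line generated by x and y is universal (equals the whole vertex set). -/
theorem stmt_16 {V : Type*} (G : SimpleGraph V) (hconn : G.Connected)
    (x y : V) (hbridge : G.IsBridge s(x, y)) :
    graphLine G x y = Set.univ := by
  classical
  rw [SimpleGraph.isBridge_iff_adj_and_forall_walk_mem_edges] at hbridge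
  have hwalk := hbridge
  have hadj : G.Adj x y := by
    obtain ⟨w⟩ := hconn x y
    exact SimpleGraph.Walk.adj_of_mem_edges w (hwalk w)
  have hxy : G.dist x y = 1 := SimpleGraph.dist_eq_one_iff_adj.mpr hadj
  ext z
  simp only [Set.mem_univ, iff_true, graphLine, Set.mem_union, Set.mem_setOf_eq]
  right
  obtain ⟨p, hp⟩ := (hconn z y).exists_walk_length_eq_dist
  by_cases he : s(x, y) ∈ p.edges
  · left
    have hx : x ∈ p.support := SimpleGraph.Walk.fst_mem_support_of_mem_edges p he
    have hsplit := p.take_spec hx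
    have hlen : (p.takeUntil x hx).length + (p.dropUntil x hx).length = p.length := by
      rw [← SimpleGraph.Walk.length_append, hsplit]
    have h1 : G.dist z x ≤ (p.takeUntil x hx).length := SimpleGraph.dist_le _
    have h2 : G.dist x y ≤ (p.dropUntil x hx).length := SimpleGraph.dist_le _
    have h3 : G.dist z y ≤ G.dist z x + G.dist x y := hconn.dist_triangle
    omega
  · right; right
    obtain ⟨q, hq⟩ := (hconn x z).exists_walk_length_eq_dist
    have hmem := hwalk (q.append p)
    rw [SimpleGraph.Walk.edges_append, List.mem_append] at hmem
    have heq : s(x, y) ∈ q.edges := hmem.resolve_right he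
    have hy : y ∈ q.support := SimpleGraph.Walk.snd_mem_support_of_mem_edges q heq
    have hsplit := q.take_spec hy
    have hlen : (q.takeUntil y hy).length + (q.dropUntil y hy).length = q.length := by
      rw [← SimpleGraph.Walk.length_append, hsplit]
    have h1 : G.dist x y ≤ (q.takeUntil y hy).length := SimpleGraph.dist_le _
    have h2 : G.dist y z ≤ (q.dropUntil y hy).length := SimpleGraph.dist_le _
    have h3 : G.dist x z ≤ G.dist x y + G.dist y z := hconn.dist_triangle
    omega
end

section
/- Let G be a graph formed by two disjoint cliques K_p (p ≥ 3) joined by a matching of size p−1 (the graph M'_{2p}). Then every edge of the matching generates a universal line. -/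
lemma aux_dist2 {V : Type*} {G : SimpleGraph V} {u w v : V}
    (h1 : G.Adj u w) (h2 : G.Adj w v) (hne : u ≠ v) (hnadj : ¬ G.Adj u v) :
    G.dist u v = 2 := by
  have hle : G.dist u v ≤ 2 := by
    have := SimpleGraph.dist_le (h1.toWalk.append h2.toWalk)
    simpa using this
  have hpos : 0 < G.dist u v :=
    SimpleGraph.Reachable.pos_dist_of_ne ⟨h1.toWalk.append h2.toWalk⟩ hne
  have h1' : G.dist u v ≠ 1 := fun h => hnadj (SimpleGraph.dist_eq_one_iff_adj.mp h)
  omega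

/-- Every matching edge of `M'_{2p}` generates a universal line. -/
theorem stmt_18 (p : ℕ) (hp : 3 ≤ p) (a : Fin p) (ha : (a : ℕ) + 1 < p) :
    graphLine (Mgraph' p) (Sum.inl a) (Sum.inr a) = Set.univ := by
  have hxy : (Mgraph' p).Adj (Sum.inl a) (Sum.inr a) := ⟨rfl, ha⟩
  have dxy : (Mgraph' p).dist (Sum.inl a) (Sum.inr a) = 1 :=
    SimpleGraph.dist_eq_one_iff_adj.mpr hxy
  ext z
  simp only [Set.mem_univ, iff_true]
  rcases z with b | b
  · rcases eq_or_ne b a with rfl | hb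
    · exact Or.inl (Or.inl rfl)
    · refine Or.inr (Or.inl ?_)
      have hadj1 : (Mgraph' p).Adj (Sum.inl b) (Sum.inl a) := hb
      have d1 : (Mgraph' p).dist (Sum.inl b) (Sum.inl a) = 1 :=
        SimpleGraph.dist_eq_one_iff_adj.mpr hadj1
      have d2 : (Mgraph' p).dist (Sum.inl b) (Sum.inr a) = 2 := by
        refine aux_dist2 hadj1 hxy (by simp) ?_
        rintro ⟨h, -⟩; exact hb h
      rw [d1, d2, dxy]
  · rcases eq_or_ne b a with rfl | hb
    · exact Or.inl (Or.inr rfl)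
    · refine Or.inr (Or.inr (Or.inr ?_))
      have hadj1 : (Mgraph' p).Adj (Sum.inr a) (Sum.inr b) := hb.symm
      have d1 : (Mgraph' p).dist (Sum.inr a) (Sum.inr b) = 1 :=
        SimpleGraph.dist_eq_one_iff_adj.mpr hadj1
      have d2 : (Mgraph' p).dist (Sum.inl a) (Sum.inr b) = 2 := by
        refine aux_dist2 hxy hadj1 (by simp) ?_
        rintro ⟨h, -⟩; exact hb h.symm
      rw [d1, d2, dxy]
end

section
/- Let G be a connected graph of diameter 3 and x a vertex of degree 1 with unique neighbor u. Then line(x,u) is universal, every vertex at distance 2 from x is adjacent to u, and every vertex at distance 3 from x is at distance 2 from u. -/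
lemma key {V : Type*} (G : SimpleGraph V) (hconn : G.Connected)
    (x u : V) (hu : ∀ z, G.Adj x z ↔ z = u) (v : V) (hv : v ≠ x) :
    G.dist x v = 1 + G.dist u v := by
  have hxu : G.Adj x u := (hu u).mpr rfl
  have hd1 : G.dist x u = 1 := SimpleGraph.dist_eq_one_iff_adj.mpr hxu
  have hne : G.dist x v ≠ 0 := by
    intro h; exact hv ((hconn.dist_eq_zero_iff).mp h).symm
  obtain ⟨p, hp⟩ := SimpleGraph.exists_walk_of_dist_ne_zero hne
  refine le_antisymm ?_ ?_
  · calc G.dist x v ≤ G.dist x u + G.dist u v := hconn.dist_triangle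
      _ = 1 + G.dist u v := by rw [hd1]
  · cases p with
    | nil => exact absurd rfl hv
    | @cons _ w _ h q =>
      have hw : w = u := (hu w).mp h
      have : G.dist u v ≤ q.length := by
        subst hw; exact SimpleGraph.dist_le q
      simp only [SimpleGraph.Walk.length_cons] at hp
      omega

theorem stmt_19 {V : Type*} (G : SimpleGraph V) (hconn : G.Connected)
    (hdiam : ∀ a b : V, G.dist a b ≤ 3) (hex : ∃ a b : V, G.dist a b = 3)
    (x u : V) (hu : ∀ z, G.Adj x z ↔ z = u) :
    graphLine G x u = Set.univ ∧
      (∀ v, G.dist x v = 2 → G.Adj u v) ∧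
      (∀ w, G.dist x w = 3 → G.dist u w = 2) := by
  have hxu : G.Adj x u := (hu u).mpr rfl
  have hd1 : G.dist x u = 1 := SimpleGraph.dist_eq_one_iff_adj.mpr hxu
  refine ⟨?_, ?_, ?_⟩
  · ext z
    simp only [Set.mem_univ, iff_true, graphLine, Set.mem_union, Set.mem_insert_iff,
      Set.mem_singleton_iff, Set.mem_setOf_eq]
    by_cases hz : z = x
    · exact Or.inl (Or.inl hz)
    · right; right; right
      rw [key G hconn x u hu z hz, hd1]
  · intro v hv
    have h2 := key G hconn x u hu v (by rintro rfl; simp [SimpleGraph.dist_self] at hv)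
    rw [hv] at h2
    exact SimpleGraph.dist_eq_one_iff_adj.mp (by omega)
  · intro w hw
    have h2 := key G hconn x u hu w (by rintro rfl; simp [SimpleGraph.dist_self] at hw)
    rw [hw] at h2
    omega
end
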